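/- arXiv:1412.3349 — 5 statements merged into one kernel-verified Lean document; each statement's English description precedes it below -/
import Mathlib

section
/- Fix r₊, r₋ > 0 with r₊ > 1 + 1/r₋, let y* = (r₋/(2r₊))(-1 + √(1+4r₊/r₋)), p_r = r₊y*/(1+r₊y*), and R₀(λ) = p_r r₋ (2 + r₋ + 2λ)/(2 + 3r₋ + λr₋ + r₋²). Then the unique solution λ_c of R₀(λ_c) = 1 is given by λ_c = (2/r₋)·(2/(r₊y*−1)) + 2/r₋ + 4/(r₊y*−1) + 1 + r₋/(r₊y*−1). -/
/-- When `r₊ > 1 + 1/r₋`, the unique positive solution of `R₀(λ_c) = 1` is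
`λ_c = (2/r₋)(2/(r₊y*−1)) + 2/r₋ + 4/(r₊y*−1) + 1 + r₋/(r₊y*−1)`. -/
theorem stmt7 (rp rm ystar pr lamc : ℝ) (hrp : 0 < rp) (hrm : 0 < rm)
    (hcond : rp > 1 + 1 / rm)
    (hy : ystar = rm / (2 * rp) * (-1 + Real.sqrt (1 + 4 * rp / rm)))
    (hpr : pr = rp * ystar / (1 + rp * ystar))
    (R₀ : ℝ → ℝ)
    (hR : ∀ lam, R₀ lam = pr * rm * (2 + rm + 2 * lam) / (2 + 3 * rm + lam * rm + rm ^ 2))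
    (hlamc : lamc = 2 / rm * (2 / (rp * ystar - 1)) + 2 / rm + 4 / (rp * ystar - 1)
      + 1 + rm / (rp * ystar - 1)) :
    R₀ lamc = 1 ∧ ∀ lam : ℝ, 0 < lam → R₀ lam = 1 → lam = lamc := by
  have hrm' : rm ≠ 0 := hrm.ne'
  set q : ℝ := Real.sqrt (1 + 4 * rp / rm) with hqdef
  have hq0 : 0 ≤ q := Real.sqrt_nonneg _
  have hq : q ^ 2 = 1 + 4 * rp / rm := by
    rw [hqdef, sq, Real.mul_self_sqrt]
    positivity
  have h1 : rm * q ^ 2 = rm + 4 * rp := by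
    field_simp at hq
    linarith [hq]
  have h2 : rm * rp > rm + 1 := by
    have : (1 / rm) * rm = 1 := by field_simp
    nlinarith [hcond, hrm]
  -- s := rp * ystar
  have hs : rp * ystar = rm / 2 * (q - 1) := by
    rw [hy]; field_simp; ring
  have hs1 : 1 < rp * ystar := by
    rw [hs]
    have hkey : (rm * q) ^ 2 > (rm + 2) ^ 2 := by nlinarith [h1, h2, hrm]
    have : rm * q > rm + 2 := by nlinarith [mul_nonneg hrm.le hq0, hkey]
    nlinarith [this]
  set s : ℝ := rp * ystar with hsdef
  have hd : 0 < s - 1 := by linarith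
  have hd' : s - 1 ≠ 0 := hd.ne'
  have hs0 : 0 < 1 + s := by linarith
  have hs0' : 1 + s ≠ 0 := hs0.ne'
  have hlc : 0 < lamc := by
    rw [hlamc]
    have t1 : 0 < 2 / rm * (2 / (s - 1)) := by positivity
    have t2 : 0 < 2 / rm := by positivity
    have t3 : 0 < 4 / (s - 1) := by positivity
    have t4 : 0 < rm / (s - 1) := by positivity
    linarith
  have hden : ∀ lam : ℝ, 0 < lam → (0:ℝ) < 2 + 3 * rm + lam * rm + rm ^ 2 := by
    intro lam hlam
    nlinarith [mul_pos hlam hrm, sq_nonneg rm]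
  -- the key cleared equation at lamc
  have hmain : pr * rm * (2 + rm + 2 * lamc) = 2 + 3 * rm + lamc * rm + rm ^ 2 := by
    rw [hpr, hlamc]
    field_simp
    ring
  have hR0c : R₀ lamc = 1 := by
    rw [hR]
    rw [div_eq_one_iff_eq (hden lamc hlc).ne']
    exact hmain
  refine ⟨hR0c, fun lam hlam hlameq => ?_⟩
  rw [hR, div_eq_one_iff_eq (hden lam hlam).ne'] at hlameq
  -- subtract the two equations
  have hprval : pr = s / (1 + s) := hpr
  have hco : 2 * pr - 1 = (s - 1) / (1 + s) := by
    rw [hprval]; field_simp; ring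
  have hco' : 0 < 2 * pr - 1 := by
    rw [hco]; positivity
  have hz : (2 * pr - 1) * rm * (lam - lamc) = 0 := by
    linear_combination hlameq - hmain
  have hne : (2 * pr - 1) * rm ≠ 0 := (mul_pos hco' hrm).ne'
  have := (mul_eq_zero.mp hz).resolve_left hne
  linarith [sub_eq_zero.mp this]
end

section
/- Fix r₊, r₋ > 0 with r₊ > 1 + 1/r₋, and let λ_c(r₊, r₋) = (2/r₋)·(2/(r₊y*−1)) + 2/r₋ + 4/(r₊y*−1) + 1 + r₋/(r₊y*−1) where y* = (r₋/(2r₊))(-1 + √(1+4r₊/r₋)). Then for fixed r₋, λ_c → 1 + 2/r₋ as r₊ → ∞. -/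
/-- For fixed `r₋`, the critical rate `λ_c(r₊, r₋) → 1 + 2/r₋` as `r₊ → ∞`. -/
theorem stmt8 (rm : ℝ) (hrm : 0 < rm)
    (ystar : ℝ → ℝ)
    (hy : ∀ rp, ystar rp = rm / (2 * rp) * (-1 + Real.sqrt (1 + 4 * rp / rm)))
    (lamc : ℝ → ℝ)
    (hlamc : ∀ rp, lamc rp = 2 / rm * (2 / (rp * ystar rp - 1)) + 2 / rm
      + 4 / (rp * ystar rp - 1) + 1 + rm / (rp * ystar rp - 1)) :
    Filter.Tendsto lamc Filter.atTop (nhds (1 + 2 / rm)) := by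
  have hg : Filter.Tendsto (fun rp => rp * ystar rp - 1) Filter.atTop Filter.atTop := by
    have h1 : Filter.Tendsto (fun rp : ℝ => 1 + 4 * rp / rm) Filter.atTop Filter.atTop := by
      apply Filter.tendsto_atTop_add_const_left
      exact ((Filter.tendsto_id.const_mul_atTop (by norm_num : (0:ℝ) < 4)).atTop_div_const hrm)
    have h2 : Filter.Tendsto (fun rp : ℝ =>
        rm / 2 * (-1 + Real.sqrt (1 + 4 * rp / rm)) - 1) Filter.atTop Filter.atTop := by
      apply Filter.tendsto_atTop_add_const_right
      apply Filter.Tendsto.const_mul_atTop (by positivity : (0:ℝ) < rm / 2)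
      have hsqrt : Filter.Tendsto Real.sqrt Filter.atTop Filter.atTop := by
        have hs : Real.sqrt = fun x : ℝ => x ^ (1/2 : ℝ) := funext fun x => Real.sqrt_eq_rpow x
        rw [hs]
        exact tendsto_rpow_atTop (by norm_num)
      exact Filter.tendsto_atTop_add_const_left _ _ (hsqrt.comp h1)
    apply h2.congr'
    filter_upwards [Filter.eventually_gt_atTop (0:ℝ)] with rp hrp
    rw [hy rp]
    field_simp
  have hinv : Filter.Tendsto (fun rp => (rp * ystar rp - 1)⁻¹) Filter.atTop (nhds 0) :=
    Filter.Tendsto.inv_tendsto_atTop hg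
  have H : Filter.Tendsto
      (fun rp => (4 / rm + 4 + rm) * (rp * ystar rp - 1)⁻¹ + (2 / rm + 1))
      Filter.atTop (nhds ((4 / rm + 4 + rm) * 0 + (2 / rm + 1))) :=
    (hinv.const_mul _).add_const _
  have : ((4 / rm + 4 + rm) * 0 + (2 / rm + 1)) = 1 + 2 / rm := by ring
  rw [this] at H
  apply H.congr
  intro rp
  rw [hlamc rp]
  simp only [div_eq_mul_inv]
  ring
end

section
/- Let r₊, r₋, λ, y* > 0 with a = 1+λ+r₋, b = 2+r₋, ab > 2λ, p_r = r₊y*/(1+r₊y*), and R₀ = p_r r₋ (b+2λ)/(ab−2λ). Suppose R₀ > 1. Then there exists μ > 0 satisfying μ = −(1 + r₊y*) + r₋ r₊ y* (μ + b + 2λ)/((μ+b)(μ+a) − 2λ). -/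
set_option maxHeartbeats 800000


/-- If `R₀ > 1` then the eigenvalue equation
`μ = −(1 + r₊y*) + r₋ r₊ y* (μ + b + 2λ)/((μ+b)(μ+a) − 2λ)` has a positive root. -/
theorem stmt10 (rp rm lam ystar a b pr R₀ : ℝ)
    (hrp : 0 < rp) (hrm : 0 < rm) (hlam : 0 < lam) (hy : 0 < ystar)
    (ha : a = 1 + lam + rm) (hb : b = 2 + rm) (hab : a * b > 2 * lam)
    (hpr : pr = rp * ystar / (1 + rp * ystar))
    (hR : R₀ = pr * rm * (b + 2 * lam) / (a * b - 2 * lam))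
    (hsup : R₀ > 1) :
    ∃ μ : ℝ, 0 < μ ∧
      μ = -(1 + rp * ystar) + rm * rp * ystar * (μ + b + 2 * lam)
        / ((μ + b) * (μ + a) - 2 * lam) := by
  set c := rp * ystar with hc
  have hcpos : 0 < c := mul_pos hrp hy
  set K := rm * c with hK
  have hKpos : 0 < K := mul_pos hrm hcpos
  have hapos : 0 < a := by rw [ha]; linarith
  have hbpos : 0 < b := by rw [hb]; linarith
  have hD0 : 0 < a * b - 2 * lam := by linarith
  have h1c : (0:ℝ) < 1 + c := by linarith
  set P : ℝ → ℝ := fun μ =>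
    (μ + 1 + c) * ((μ + b) * (μ + a) - 2 * lam) - K * (μ + b + 2 * lam) with hP
  have hcont : Continuous P := by rw [hP]; fun_prop
  clear_value c K P
  -- P 0 < 0 from R₀ > 1
  have hsup' : c * rm * (b + 2 * lam) > (1 + c) * (a * b - 2 * lam) := by
    have h1 := hsup
    rw [hR, hpr, gt_iff_lt, lt_div_iff₀ hD0,
      div_mul_eq_mul_div, div_mul_eq_mul_div, lt_div_iff₀ h1c] at h1
    nlinarith [h1]
  have hP0 : P 0 < 0 := by
    simp only [hP]
    nlinarith [hsup']
  set M := 1 + a + b + c + 2 * lam + 2 * K with hM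
  clear_value M
  have hMpos : (0:ℝ) < M := by rw [hM]; positivity
  have hM1 : (1:ℝ) ≤ M := by nlinarith
  have hMM : M ≤ M * M := by nlinarith
  have hPM : 0 < P M := by
    simp only [hP]
    have hbound : K * (M + b + 2 * lam) ≤ 2 * K * M := by nlinarith
    have hDM : 0 < M * M - 2 * lam - 2 * K := by nlinarith
    have h5 : M * (M * M - 2 * lam) ≤ (M + 1 + c) * ((M + b) * (M + a) - 2 * lam) := by
      nlinarith [mul_pos hMpos hMpos, mul_nonneg hMpos.le hapos.le,
        mul_nonneg hMpos.le hbpos.le, mul_nonneg hapos.le hbpos.le,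
        mul_nonneg (mul_nonneg hapos.le hbpos.le) hcpos.le]
    have h6 : 0 < M * (M * M - 2 * lam - 2 * K) := mul_pos hMpos hDM
    have h7 : M * (M * M - 2 * lam - 2 * K) = M * (M * M - 2 * lam) - 2 * K * M := by
      ring
    linarith
  -- IVT
  have hsub := intermediate_value_Icc hMpos.le hcont.continuousOn
  obtain ⟨μ, hμmem, hμeq⟩ := hsub ⟨hP0.le, hPM.le⟩
  have hμ0 : 0 < μ := by
    rcases lt_or_eq_of_le hμmem.1 with h | h
    · exact h
    · exfalso; rw [← h] at hμeq; rw [hμeq] at hP0; exact lt_irrefl _ hP0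
  have hDpos : 0 < (μ + b) * (μ + a) - 2 * lam := by nlinarith
  refine ⟨μ, hμ0, ?_⟩
  have key : (μ + 1 + c) * ((μ + b) * (μ + a) - 2 * lam) = K * (μ + b + 2 * lam) := by
    have := hμeq
    simp only [hP] at this
    linarith
  subst hK hc
  have hfrac : rm * rp * ystar * (μ + b + 2 * lam) / ((μ + b) * (μ + a) - 2 * lam)
      = μ + 1 + rp * ystar := by
    rw [div_eq_iff (ne_of_gt hDpos)]
    linear_combination -key
  rw [hfrac]
  ring
end

section
/- Consider the system of ODEs y' = −r₊y² + r₋(1−y), i' = −(1+r₊y)i + r₋(ip + ii), ip' = r₊(y − i/2)i − (1+r₋)ip + ii, ii' = r₊i²/2 + λ·ip − (2+r₋+λ)ii, with parameters r₊, r₋, λ > 0. The compact set Λ = {(y,i,ip,ii) ∈ ℝ⁴₊ : i ≤ y ≤ 1, ii ≤ ip ≤ (1−y)/2} is positively invariant: any solution starting in Λ remains in Λ for all t ≥ 0. -/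
lemma min_zero_eq_neg_max (a : ℝ) : min a 0 = -(max (-a) 0) := by
  rcases le_total a 0 with h | h
  · rw [min_eq_left h, max_eq_left (by linarith)]; ring
  · rw [min_eq_right h, max_eq_right (by linarith)]; ring

lemma max_pos_eq {a : ℝ} (h : 0 < max (-a) 0) : max (-a) 0 = -a ∧ a < 0 := by
  rcases lt_or_ge a 0 with h' | h'
  · exact ⟨max_eq_left (by linarith), h'⟩
  · rw [max_eq_right (by linarith)] at h; exact absurd h (lt_irrefl 0)

lemma mul_lb_aux {a b B s : ℝ} (hB : 0 ≤ B) (ha : -B ≤ a) (hb : 0 ≤ b) (hbs : b ≤ s) :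
    -(B * s) ≤ a * b := by
  nlinarith [mul_nonneg (show 0 ≤ a + B by linarith) hb,
    mul_nonneg hB (show 0 ≤ s - b by linarith)]

lemma mul_ub_aux {a b B s : ℝ} (hB : 0 ≤ B) (ha : a ≤ B) (hb : 0 ≤ b) (hbs : b ≤ s) :
    a * b ≤ B * s := by
  nlinarith [mul_nonneg (show 0 ≤ B - a by linarith) hb,
    mul_nonneg hB (show 0 ≤ s - b by linarith)]

lemma mul_lb2_aux {a b B s : ℝ} (hs : 0 ≤ s) (ha : -s ≤ a) (hb : 0 ≤ b) (hbB : b ≤ B) :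
    -(B * s) ≤ a * b := by
  nlinarith [mul_nonneg (show 0 ≤ a + s by linarith) hb,
    mul_nonneg hs (show 0 ≤ B - b by linarith)]

lemma cauchy8 (n1 n2 n3 n4 n5 n6 n7 n8 : ℝ) :
    (n1 + n2 + n3 + n4 + n5 + n6 + n7 + n8) ^ 2
      ≤ 8 * (n1 ^ 2 + n2 ^ 2 + n3 ^ 2 + n4 ^ 2 + n5 ^ 2 + n6 ^ 2 + n7 ^ 2 + n8 ^ 2) := by
  have sq2 : ∀ a b : ℝ, (a + b) ^ 2 ≤ 2 * (a ^ 2 + b ^ 2) := fun a b => by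
    nlinarith [sq_nonneg (a - b)]
  linarith only [sq2 n1 n2, sq2 n3 n4, sq2 n5 n6, sq2 n7 n8, sq2 (n1 + n2) (n3 + n4),
    sq2 (n5 + n6) (n7 + n8), sq2 (n1 + n2 + n3 + n4) (n5 + n6 + n7 + n8)]

set_option maxHeartbeats 1000000 in
lemma final_comb (rp rm lam B Y I P J s n1 n2 n3 n4 n5 n6 n7 n8 : ℝ)
    (T1 : 0 ≤ n1 * ((-rp * Y ^ 2 + rm * (1 - Y))
      + (3 * rp * B + 3 * rm + lam + 3) * s))
    (T2 : 0 ≤ n2 * ((-(1 + rp * Y) * I + rm * (P + J))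
      + (3 * rp * B + 3 * rm + lam + 3) * s))
    (T3 : 0 ≤ n3 * ((rp * (Y - I / 2) * I - (1 + rm) * P + J)
      + (3 * rp * B + 3 * rm + lam + 3) * s))
    (T4 : 0 ≤ n4 * ((rp * I ^ 2 / 2 + lam * P - (2 + rm + lam) * J)
      + (3 * rp * B + 3 * rm + lam + 3) * s))
    (T5 : 0 ≤ n5 * (((-rp * Y ^ 2 + rm * (1 - Y)) - (-(1 + rp * Y) * I + rm * (P + J)))
      + (3 * rp * B + 3 * rm + lam + 3) * s))
    (T6 : 0 ≤ n6 * ((0 - (-rp * Y ^ 2 + rm * (1 - Y)))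
      + (3 * rp * B + 3 * rm + lam + 3) * s))
    (T7 : 0 ≤ n7 * (((rp * (Y - I / 2) * I - (1 + rm) * P + J) - (rp * I ^ 2 / 2 + lam * P - (2 + rm + lam) * J))
      + (3 * rp * B + 3 * rm + lam + 3) * s))
    (T8 : 0 ≤ n8 * (((0 - (-rp * Y ^ 2 + rm * (1 - Y))) / 2 - (rp * (Y - I / 2) * I - (1 + rm) * P + J))
      + (3 * rp * B + 3 * rm + lam + 3) * s))
    (hKcau : 0 ≤ (3 * rp * B + 3 * rm + lam + 3) *
      (8 * (n1 ^ 2 + n2 ^ 2 + n3 ^ 2 + n4 ^ 2 + n5 ^ 2 + n6 ^ 2 + n7 ^ 2 + n8 ^ 2)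
        - s ^ 2))
    (hKs : (3 * rp * B + 3 * rm + lam + 3) * s * n1
      + (3 * rp * B + 3 * rm + lam + 3) * s * n2
      + (3 * rp * B + 3 * rm + lam + 3) * s * n3
      + (3 * rp * B + 3 * rm + lam + 3) * s * n4
      + (3 * rp * B + 3 * rm + lam + 3) * s * n5
      + (3 * rp * B + 3 * rm + lam + 3) * s * n6
      + (3 * rp * B + 3 * rm + lam + 3) * s * n7
      + (3 * rp * B + 3 * rm + lam + 3) * s * n8
      = (3 * rp * B + 3 * rm + lam + 3) * s ^ 2) :
    2 * (-n1) * (-rp * Y ^ 2 + rm * (1 - Y))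
      + 2 * (-n2) * (-(1 + rp * Y) * I + rm * (P + J))
      + 2 * (-n3) * (rp * (Y - I / 2) * I - (1 + rm) * P + J)
      + 2 * (-n4) * (rp * I ^ 2 / 2 + lam * P - (2 + rm + lam) * J)
      + 2 * (-n5) * ((-rp * Y ^ 2 + rm * (1 - Y)) - (-(1 + rp * Y) * I + rm * (P + J)))
      + 2 * (-n6) * (0 - (-rp * Y ^ 2 + rm * (1 - Y)))
      + 2 * (-n7) * ((rp * (Y - I / 2) * I - (1 + rm) * P + J) - (rp * I ^ 2 / 2 + lam * P - (2 + rm + lam) * J))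
      + 2 * (-n8) * ((0 - (-rp * Y ^ 2 + rm * (1 - Y))) / 2 - (rp * (Y - I / 2) * I - (1 + rm) * P + J))
    ≤ 16 * (3 * rp * B + 3 * rm + lam + 3) *
      ((-n1) ^ 2 + (-n2) ^ 2 + (-n3) ^ 2 + (-n4) ^ 2 + (-n5) ^ 2 + (-n6) ^ 2 + (-n7) ^ 2 + (-n8) ^ 2) := by
  linarith only [T1, T2, T3, T4, T5, T6, T7, T8, hKs, hKcau]

set_option maxHeartbeats 1000000 in
lemma keyineq (rp rm lam B Y I P J : ℝ) (hrp : 0 < rp) (hrm : 0 < rm) (hlam : 0 < lam)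
    (hB0 : 0 ≤ B) (hYB : |Y| ≤ B) (hIB : |I| ≤ B) :
    2 * min (Y) 0 * (-rp * Y ^ 2 + rm * (1 - Y))
      + 2 * min (I) 0 * (-(1 + rp * Y) * I + rm * (P + J))
      + 2 * min (P) 0 * (rp * (Y - I / 2) * I - (1 + rm) * P + J)
      + 2 * min (J) 0 * (rp * I ^ 2 / 2 + lam * P - (2 + rm + lam) * J)
      + 2 * min (Y - I) 0 * ((-rp * Y ^ 2 + rm * (1 - Y)) - (-(1 + rp * Y) * I + rm * (P + J)))
      + 2 * min (1 - Y) 0 * (0 - (-rp * Y ^ 2 + rm * (1 - Y)))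
      + 2 * min (P - J) 0 * ((rp * (Y - I / 2) * I - (1 + rm) * P + J) - (rp * I ^ 2 / 2 + lam * P - (2 + rm + lam) * J))
      + 2 * min ((1 - Y) / 2 - P) 0 * ((0 - (-rp * Y ^ 2 + rm * (1 - Y))) / 2 - (rp * (Y - I / 2) * I - (1 + rm) * P + J))
    ≤ 16 * (3 * rp * B + 3 * rm + lam + 3) *
      ((min (Y) 0) ^ 2 + (min (I) 0) ^ 2 + (min (P) 0) ^ 2 + (min (J) 0) ^ 2 + (min (Y - I) 0) ^ 2 + (min (1 - Y) 0) ^ 2 + (min (P - J) 0) ^ 2 + (min ((1 - Y) / 2 - P) 0) ^ 2) := by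
  obtain ⟨hY1, hY2⟩ := abs_le.1 hYB
  obtain ⟨hI1, hI2⟩ := abs_le.1 hIB
  obtain ⟨n1, hn1def⟩ : ∃ n, n = max (-(Y)) 0 := ⟨_, rfl⟩
  obtain ⟨n2, hn2def⟩ : ∃ n, n = max (-(I)) 0 := ⟨_, rfl⟩
  obtain ⟨n3, hn3def⟩ : ∃ n, n = max (-(P)) 0 := ⟨_, rfl⟩
  obtain ⟨n4, hn4def⟩ : ∃ n, n = max (-(J)) 0 := ⟨_, rfl⟩
  obtain ⟨n5, hn5def⟩ : ∃ n, n = max (-(Y - I)) 0 := ⟨_, rfl⟩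
  obtain ⟨n6, hn6def⟩ : ∃ n, n = max (-(1 - Y)) 0 := ⟨_, rfl⟩
  obtain ⟨n7, hn7def⟩ : ∃ n, n = max (-(P - J)) 0 := ⟨_, rfl⟩
  obtain ⟨n8, hn8def⟩ : ∃ n, n = max (-((1 - Y) / 2 - P)) 0 := ⟨_, rfl⟩
  have e1 : min (Y) 0 = -n1 := by rw [hn1def]; exact min_zero_eq_neg_max _
  have e2 : min (I) 0 = -n2 := by rw [hn2def]; exact min_zero_eq_neg_max _
  have e3 : min (P) 0 = -n3 := by rw [hn3def]; exact min_zero_eq_neg_max _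
  have e4 : min (J) 0 = -n4 := by rw [hn4def]; exact min_zero_eq_neg_max _
  have e5 : min (Y - I) 0 = -n5 := by rw [hn5def]; exact min_zero_eq_neg_max _
  have e6 : min (1 - Y) 0 = -n6 := by rw [hn6def]; exact min_zero_eq_neg_max _
  have e7 : min (P - J) 0 = -n7 := by rw [hn7def]; exact min_zero_eq_neg_max _
  have e8 : min ((1 - Y) / 2 - P) 0 = -n8 := by rw [hn8def]; exact min_zero_eq_neg_max _
  have hn1 : 0 ≤ n1 := hn1def ▸ le_max_right _ _
  have hn2 : 0 ≤ n2 := hn2def ▸ le_max_right _ _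
  have hn3 : 0 ≤ n3 := hn3def ▸ le_max_right _ _
  have hn4 : 0 ≤ n4 := hn4def ▸ le_max_right _ _
  have hn5 : 0 ≤ n5 := hn5def ▸ le_max_right _ _
  have hn6 : 0 ≤ n6 := hn6def ▸ le_max_right _ _
  have hn7 : 0 ≤ n7 := hn7def ▸ le_max_right _ _
  have hn8 : 0 ≤ n8 := hn8def ▸ le_max_right _ _
  have hc1 : -(Y) ≤ n1 := hn1def ▸ le_max_left _ _
  have hc2 : -(I) ≤ n2 := hn2def ▸ le_max_left _ _
  have hc3 : -(P) ≤ n3 := hn3def ▸ le_max_left _ _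
  have hc4 : -(J) ≤ n4 := hn4def ▸ le_max_left _ _
  have hc5 : -(Y - I) ≤ n5 := hn5def ▸ le_max_left _ _
  have hc6 : -(1 - Y) ≤ n6 := hn6def ▸ le_max_left _ _
  have hc7 : -(P - J) ≤ n7 := hn7def ▸ le_max_left _ _
  have hc8 : -((1 - Y) / 2 - P) ≤ n8 := hn8def ▸ le_max_left _ _
  obtain ⟨s, hsdef⟩ : ∃ s : ℝ, s = n1 + n2 + n3 + n4 + n5 + n6 + n7 + n8 := ⟨_, rfl⟩
  have hs0 : (0:ℝ) ≤ s := by rw [hsdef]; positivity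
  have hBs : (0:ℝ) ≤ B * s := mul_nonneg hB0 hs0
  have gs1 : -s ≤ Y := by rw [hsdef]; linarith
  have gs2 : -s ≤ I := by rw [hsdef]; linarith
  have gs3 : -s ≤ P := by rw [hsdef]; linarith
  have gs4 : -s ≤ J := by rw [hsdef]; linarith
  have gs5 : -s ≤ Y - I := by rw [hsdef]; linarith
  have gs6 : -s ≤ 1 - Y := by rw [hsdef]; linarith
  have gs7 : -s ≤ P - J := by rw [hsdef]; linarith
  have gs8 : -s ≤ (1 - Y) / 2 - P := by rw [hsdef]; linarith
  have hns1 : n1 ≤ s := by rw [hsdef]; linarith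
  have hns2 : n2 ≤ s := by rw [hsdef]; linarith
  have hns3 : n3 ≤ s := by rw [hsdef]; linarith
  have hns4 : n4 ≤ s := by rw [hsdef]; linarith
  have hns5 : n5 ≤ s := by rw [hsdef]; linarith
  have hns6 : n6 ≤ s := by rw [hsdef]; linarith
  have hns7 : n7 ≤ s := by rw [hsdef]; linarith
  have hns8 : n8 ≤ s := by rw [hsdef]; linarith
  have T1 : 0 ≤ n1 * ((-rp * Y ^ 2 + rm * (1 - Y))
      + (3 * rp * B + 3 * rm + lam + 3) * s) := by
    rcases eq_or_lt_of_le hn1 with h | h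
    · rw [← h, zero_mul]
    · rw [hn1def] at h
      obtain ⟨hne, hlt⟩ := max_pos_eq h
      have hEq : n1 = -(Y) := hn1def.trans hne
      refine mul_nonneg hn1 ?_
      have nn1 : 0 ≤ rp * B * s := mul_nonneg (mul_nonneg hrp.le hB0) hs0
      have nn2 : 0 ≤ rm * s := mul_nonneg hrm.le hs0
      have nn3 : 0 ≤ lam * s := mul_nonneg hlam.le hs0
      have hYs : -Y ≤ s := by linarith
      have key : rp * Y ^ 2 ≤ rp * (B * s) := by
        refine mul_le_mul_of_nonneg_left ?_ hrp.le
        have f := mul_ub_aux hB0 (show -Y ≤ B by linarith)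
          (show (0:ℝ) ≤ -Y by linarith) hYs
        linarith only [f]
      have hrm1 : 0 ≤ rm * (1 - Y) :=
        mul_nonneg hrm.le (show (0:ℝ) ≤ 1 - Y by linarith)
      linarith only [key, nn1, nn2, nn3, hrm1, hs0]
  have T2 : 0 ≤ n2 * ((-(1 + rp * Y) * I + rm * (P + J))
      + (3 * rp * B + 3 * rm + lam + 3) * s) := by
    rcases eq_or_lt_of_le hn2 with h | h
    · rw [← h, zero_mul]
    · rw [hn2def] at h
      obtain ⟨hne, hlt⟩ := max_pos_eq h
      have hEq : n2 = -(I) := hn2def.trans hne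
      refine mul_nonneg hn2 ?_
      have nn1 : 0 ≤ rp * B * s := mul_nonneg (mul_nonneg hrp.le hB0) hs0
      have nn2 : 0 ≤ rm * s := mul_nonneg hrm.le hs0
      have nn3 : 0 ≤ lam * s := mul_nonneg hlam.le hs0
      have hIs : -I ≤ s := by linarith
      have key : rp * (-(B * s)) ≤ rp * (Y * (-I)) :=
        mul_le_mul_of_nonneg_left
          (mul_lb_aux hB0 hY1 (show (0:ℝ) ≤ -I by linarith) hIs) hrp.le
      have h1 : 0 ≤ rm * (P + s) := mul_nonneg hrm.le (by linarith)
      have h2 : 0 ≤ rm * (J + s) := mul_nonneg hrm.le (by linarith)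
      linarith only [key, h1, h2, nn1, nn2, nn3, hs0, show (0:ℝ) ≤ -I by linarith]
  have T3 : 0 ≤ n3 * ((rp * (Y - I / 2) * I - (1 + rm) * P + J)
      + (3 * rp * B + 3 * rm + lam + 3) * s) := by
    rcases eq_or_lt_of_le hn3 with h | h
    · rw [← h, zero_mul]
    · rw [hn3def] at h
      obtain ⟨hne, hlt⟩ := max_pos_eq h
      have hEq : n3 = -(P) := hn3def.trans hne
      refine mul_nonneg hn3 ?_
      have nn1 : 0 ≤ rp * B * s := mul_nonneg (mul_nonneg hrp.le hB0) hs0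
      have nn2 : 0 ≤ rm * s := mul_nonneg hrm.le hs0
      have nn3 : 0 ≤ lam * s := mul_nonneg hlam.le hs0
      have key : -(2 * (B * s)) ≤ (Y - I / 2) * I := by
        rcases le_or_gt 0 I with hI0 | hI0
        · have k1 := mul_lb2_aux hs0 gs5 hI0 hI2
          have k2 := sq_nonneg I
          linarith only [k1, k2, hBs]
        · have hIs : -I ≤ s := by linarith
          have k1 := mul_ub_aux hB0 hY2 (show (0:ℝ) ≤ -I by linarith) hIs
          have k2 := mul_ub_aux hB0 (show -I ≤ B by linarith)
            (show (0:ℝ) ≤ -I by linarith) hIs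
          linarith only [k1, k2, hBs]
      have keyr : rp * (-(2 * (B * s))) ≤ rp * ((Y - I / 2) * I) :=
        mul_le_mul_of_nonneg_left key hrp.le
      have h1 : 0 ≤ (1 + rm) * (-P) :=
        mul_nonneg (by linarith) (by linarith)
      linarith only [keyr, h1, gs4, nn1, nn2, nn3, hs0]
  have T4 : 0 ≤ n4 * ((rp * I ^ 2 / 2 + lam * P - (2 + rm + lam) * J)
      + (3 * rp * B + 3 * rm + lam + 3) * s) := by
    rcases eq_or_lt_of_le hn4 with h | h
    · rw [← h, zero_mul]
    · rw [hn4def] at h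
      obtain ⟨hne, hlt⟩ := max_pos_eq h
      have hEq : n4 = -(J) := hn4def.trans hne
      refine mul_nonneg hn4 ?_
      have nn1 : 0 ≤ rp * B * s := mul_nonneg (mul_nonneg hrp.le hB0) hs0
      have nn2 : 0 ≤ rm * s := mul_nonneg hrm.le hs0
      have nn3 : 0 ≤ lam * s := mul_nonneg hlam.le hs0
      have h1 : 0 ≤ rp * I ^ 2 := mul_nonneg hrp.le (sq_nonneg I)
      have h2 : 0 ≤ lam * (P + s) := mul_nonneg hlam.le (by linarith)
      have h3 : 0 ≤ (2 + rm + lam) * (-J) :=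
        mul_nonneg (by linarith) (by linarith)
      linarith only [h1, h2, h3, nn1, nn2, nn3, hs0]
  have T5 : 0 ≤ n5 * (((-rp * Y ^ 2 + rm * (1 - Y)) - (-(1 + rp * Y) * I + rm * (P + J)))
      + (3 * rp * B + 3 * rm + lam + 3) * s) := by
    rcases eq_or_lt_of_le hn5 with h | h
    · rw [← h, zero_mul]
    · rw [hn5def] at h
      obtain ⟨hne, hlt⟩ := max_pos_eq h
      have hEq : n5 = -(Y - I) := hn5def.trans hne
      refine mul_nonneg hn5 ?_
      have nn1 : 0 ≤ rp * B * s := mul_nonneg (mul_nonneg hrp.le hB0) hs0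
      have nn2 : 0 ≤ rm * s := mul_nonneg hrm.le hs0
      have nn3 : 0 ≤ lam * s := mul_nonneg hlam.le hs0
      have hIYs : I - Y ≤ s := by linarith
      have key : rp * (-(B * s)) ≤ rp * (Y * (I - Y)) :=
        mul_le_mul_of_nonneg_left
          (mul_lb_aux hB0 hY1 (show (0:ℝ) ≤ I - Y by linarith) hIYs) hrp.le
      have h1 : 0 ≤ rm * (1 - Y - P - J + 3 * s) := by
        refine mul_nonneg hrm.le ?_
        linarith only [gs7, gs8, hs0]
      linarith only [key, h1, gs2, nn1, nn2, nn3, hs0]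
  have T6 : 0 ≤ n6 * ((0 - (-rp * Y ^ 2 + rm * (1 - Y)))
      + (3 * rp * B + 3 * rm + lam + 3) * s) := by
    rcases eq_or_lt_of_le hn6 with h | h
    · rw [← h, zero_mul]
    · rw [hn6def] at h
      obtain ⟨hne, hlt⟩ := max_pos_eq h
      have hEq : n6 = -(1 - Y) := hn6def.trans hne
      refine mul_nonneg hn6 ?_
      have nn1 : 0 ≤ rp * B * s := mul_nonneg (mul_nonneg hrp.le hB0) hs0
      have nn2 : 0 ≤ rm * s := mul_nonneg hrm.le hs0
      have nn3 : 0 ≤ lam * s := mul_nonneg hlam.le hs0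
      have h1 : 0 ≤ rp * Y ^ 2 := mul_nonneg hrp.le (sq_nonneg Y)
      have h2 : 0 ≤ rm * (Y - 1) := mul_nonneg hrm.le (by linarith)
      linarith only [h1, h2, nn1, nn2, nn3, hs0]
  have T7 : 0 ≤ n7 * (((rp * (Y - I / 2) * I - (1 + rm) * P + J) - (rp * I ^ 2 / 2 + lam * P - (2 + rm + lam) * J))
      + (3 * rp * B + 3 * rm + lam + 3) * s) := by
    rcases eq_or_lt_of_le hn7 with h | h
    · rw [← h, zero_mul]
    · rw [hn7def] at h
      obtain ⟨hne, hlt⟩ := max_pos_eq h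
      have hEq : n7 = -(P - J) := hn7def.trans hne
      refine mul_nonneg hn7 ?_
      have nn1 : 0 ≤ rp * B * s := mul_nonneg (mul_nonneg hrp.le hB0) hs0
      have nn2 : 0 ≤ rm * s := mul_nonneg hrm.le hs0
      have nn3 : 0 ≤ lam * s := mul_nonneg hlam.le hs0
      have key : -(2 * (B * s)) ≤ (Y - I) * I := by
        rcases le_or_gt 0 I with hI0 | hI0
        · have k1 := mul_lb2_aux hs0 gs5 hI0 hI2
          linarith only [k1, hBs]
        · have hIs : -I ≤ s := by linarith
          have k1 := mul_ub_aux hB0 hY2 (show (0:ℝ) ≤ -I by linarith) hIs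
          have k2 := mul_ub_aux hB0 (show -I ≤ B by linarith)
            (show (0:ℝ) ≤ -I by linarith) hIs
          linarith only [k1, k2, hBs]
      have keyr : rp * (-(2 * (B * s))) ≤ rp * ((Y - I) * I) :=
        mul_le_mul_of_nonneg_left key hrp.le
      have h1 : 0 ≤ (1 + rm + lam) * (J - P) :=
        mul_nonneg (by linarith) (by linarith)
      linarith only [keyr, h1, gs4, nn1, nn2, nn3, hs0]
  have T8 : 0 ≤ n8 * (((0 - (-rp * Y ^ 2 + rm * (1 - Y))) / 2 - (rp * (Y - I / 2) * I - (1 + rm) * P + J))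
      + (3 * rp * B + 3 * rm + lam + 3) * s) := by
    rcases eq_or_lt_of_le hn8 with h | h
    · rw [← h, zero_mul]
    · rw [hn8def] at h
      obtain ⟨hne, hlt⟩ := max_pos_eq h
      have hEq : n8 = -((1 - Y) / 2 - P) := hn8def.trans hne
      refine mul_nonneg hn8 ?_
      have nn1 : 0 ≤ rp * B * s := mul_nonneg (mul_nonneg hrp.le hB0) hs0
      have nn2 : 0 ≤ rm * s := mul_nonneg hrm.le hs0
      have nn3 : 0 ≤ lam * s := mul_nonneg hlam.le hs0
      have h1 : 0 ≤ rp * (Y - I) ^ 2 := mul_nonneg hrp.le (sq_nonneg (Y - I))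
      have h2 : 0 ≤ rm * (P - (1 - Y) / 2) := mul_nonneg hrm.le (by linarith)
      linarith only [h1, h2, gs7, nn1, nn2, nn3, hs0]
  have hKcau : 0 ≤ (3 * rp * B + 3 * rm + lam + 3) *
      (8 * (n1 ^ 2 + n2 ^ 2 + n3 ^ 2 + n4 ^ 2 + n5 ^ 2 + n6 ^ 2 + n7 ^ 2 + n8 ^ 2)
        - s ^ 2) := by
    refine mul_nonneg (by positivity) ?_
    rw [hsdef]
    linarith only [cauchy8 n1 n2 n3 n4 n5 n6 n7 n8]
  have hKs : (3 * rp * B + 3 * rm + lam + 3) * s * n1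
      + (3 * rp * B + 3 * rm + lam + 3) * s * n2
      + (3 * rp * B + 3 * rm + lam + 3) * s * n3
      + (3 * rp * B + 3 * rm + lam + 3) * s * n4
      + (3 * rp * B + 3 * rm + lam + 3) * s * n5
      + (3 * rp * B + 3 * rm + lam + 3) * s * n6
      + (3 * rp * B + 3 * rm + lam + 3) * s * n7
      + (3 * rp * B + 3 * rm + lam + 3) * s * n8
      = (3 * rp * B + 3 * rm + lam + 3) * s ^ 2 := by
    rw [hsdef]; ring
  rw [e1, e2, e3, e4, e5, e6, e7, e8]
  exact final_comb rp rm lam B Y I P J s n1 n2 n3 n4 n5 n6 n7 n8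
    T1 T2 T3 T4 T5 T6 T7 T8 hKcau hKs

lemma hasDerivAt_q (u : ℝ) : HasDerivAt (fun v : ℝ => (min v 0)^2) (2 * min u 0) u := by
  rcases lt_trichotomy u 0 with h | h | h
  · have he : (fun v : ℝ => v ^ 2) =ᶠ[nhds u] (fun v : ℝ => (min v 0)^2) := by
      filter_upwards [Iio_mem_nhds h] with v hv
      rw [min_eq_left (le_of_lt hv)]
    have := (hasDerivAt_pow 2 u).congr_of_eventuallyEq he.symm
    simpa [min_eq_left h.le] using this
  · subst h
    rw [hasDerivAt_iff_isLittleO]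
    simp only [min_self, min_eq_right le_rfl, ne_eq, OfNat.ofNat_ne_zero,
      not_false_eq_true, zero_pow, sub_zero, mul_zero, smul_eq_mul]
    rw [Asymptotics.isLittleO_iff]
    intro c hc
    filter_upwards [Metric.ball_mem_nhds (0:ℝ) hc] with v hv
    rw [Metric.mem_ball, Real.dist_eq, sub_zero] at hv
    have h1 : |min v 0| ≤ |v| := by
      rcases le_total v 0 with h' | h' <;>
        simp [min_eq_left, min_eq_right, h', abs_of_nonpos, abs_of_nonneg]
    have h2 : ‖(min v 0) ^ 2‖ = |min v 0| * |min v 0| := by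
      rw [Real.norm_eq_abs, ← abs_mul, sq]
    rw [h2, Real.norm_eq_abs]
    exact mul_le_mul (le_of_lt (lt_of_le_of_lt h1 hv)) h1 (abs_nonneg _) (by linarith)
  · have he : (fun _ : ℝ => (0:ℝ)) =ᶠ[nhds u] (fun v : ℝ => (min v 0)^2) := by
      filter_upwards [Ioi_mem_nhds h] with v hv
      rw [min_eq_right (le_of_lt hv)]
      norm_num
    have h0 : (2 : ℝ) * min u 0 = 0 := by rw [min_eq_right h.le]; ring
    rw [h0]
    exact (hasDerivAt_const u (0:ℝ)).congr_of_eventuallyEq he.symm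


lemma min_eq_zero_imp {a : ℝ} (h : min a 0 = 0) : 0 ≤ a := by
  rcases le_total a 0 with h' | h'
  · rw [min_eq_left h'] at h; linarith
  · exact h'




set_option maxHeartbeats 1000000 in
/-- Positive invariance of the set
`Λ = {(y,i,ip,ii) ∈ ℝ⁴₊ : i ≤ y ≤ 1, ii ≤ ip ≤ (1−y)/2}` for the mean-field
equations of the partner model. -/
theorem stmt15 (rp rm lam : ℝ) (hrp : 0 < rp) (hrm : 0 < rm) (hlam : 0 < lam)
    (y i ip ii : ℝ → ℝ)
    (hy : ∀ t ∈ Set.Ici (0 : ℝ),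
      HasDerivWithinAt y (-rp * y t ^ 2 + rm * (1 - y t)) (Set.Ici 0) t)
    (hi : ∀ t ∈ Set.Ici (0 : ℝ),
      HasDerivWithinAt i (-(1 + rp * y t) * i t + rm * (ip t + ii t)) (Set.Ici 0) t)
    (hip : ∀ t ∈ Set.Ici (0 : ℝ),
      HasDerivWithinAt ip (rp * (y t - i t / 2) * i t - (1 + rm) * ip t + ii t)
        (Set.Ici 0) t)
    (hii : ∀ t ∈ Set.Ici (0 : ℝ),
      HasDerivWithinAt ii (rp * i t ^ 2 / 2 + lam * ip t - (2 + rm + lam) * ii t)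
        (Set.Ici 0) t)
    (h0 : 0 ≤ y 0 ∧ 0 ≤ i 0 ∧ 0 ≤ ip 0 ∧ 0 ≤ ii 0 ∧
      i 0 ≤ y 0 ∧ y 0 ≤ 1 ∧ ii 0 ≤ ip 0 ∧ ip 0 ≤ (1 - y 0) / 2) :
    ∀ t ∈ Set.Ici (0 : ℝ),
      0 ≤ y t ∧ 0 ≤ i t ∧ 0 ≤ ip t ∧ 0 ≤ ii t ∧
      i t ≤ y t ∧ y t ≤ 1 ∧ ii t ≤ ip t ∧ ip t ≤ (1 - y t) / 2 := by
  obtain ⟨h01, h02, h03, h04, h05, h06, h07, h08⟩ := h0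
  intro T hT
  rw [Set.mem_Ici] at hT
  have hsub : Set.Icc (0:ℝ) T ⊆ Set.Ici 0 := fun x hx => hx.1
  have cy : ContinuousOn y (Set.Icc 0 T) :=
    fun t ht => ((hy t (hsub ht)).continuousWithinAt).mono hsub
  have ci : ContinuousOn i (Set.Icc 0 T) :=
    fun t ht => ((hi t (hsub ht)).continuousWithinAt).mono hsub
  have cip : ContinuousOn ip (Set.Icc 0 T) :=
    fun t ht => ((hip t (hsub ht)).continuousWithinAt).mono hsub
  have cii : ContinuousOn ii (Set.Icc 0 T) :=
    fun t ht => ((hii t (hsub ht)).continuousWithinAt).mono hsub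
  obtain ⟨By, hBy⟩ := isCompact_Icc.exists_bound_of_continuousOn cy
  obtain ⟨Bi, hBi⟩ := isCompact_Icc.exists_bound_of_continuousOn ci
  obtain ⟨B, hBdef⟩ : ∃ B : ℝ, B = |By| + |Bi| := ⟨_, rfl⟩
  have hB0 : 0 ≤ B := by rw [hBdef]; positivity
  have hYB : ∀ x ∈ Set.Icc (0:ℝ) T, |y x| ≤ B := by
    intro x hx
    have h1 := hBy x hx
    rw [Real.norm_eq_abs] at h1
    rw [hBdef]
    have := le_abs_self By
    have := abs_nonneg Bi
    linarith
  have hIB : ∀ x ∈ Set.Icc (0:ℝ) T, |i x| ≤ B := by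
    intro x hx
    have h1 := hBi x hx
    rw [Real.norm_eq_abs] at h1
    rw [hBdef]
    have := le_abs_self Bi
    have := abs_nonneg By
    linarith
  have qc : Continuous fun v : ℝ => (min v 0) ^ 2 :=
    (continuous_id.min continuous_const).pow 2
  have hcont : ContinuousOn (fun t => (min (y t) 0) ^ 2 + (min (i t) 0) ^ 2 + (min (ip t) 0) ^ 2 + (min (ii t) 0) ^ 2 + (min (y t - i t) 0) ^ 2 + (min (1 - y t) 0) ^ 2 + (min (ip t - ii t) 0) ^ 2 + (min ((1 - y t) / 2 - ip t) 0) ^ 2) (Set.Icc 0 T) := by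
    refine ContinuousOn.add ?_ ?_
    · refine ContinuousOn.add ?_ ?_
      · refine ContinuousOn.add ?_ ?_
        · refine ContinuousOn.add ?_ ?_
          · refine ContinuousOn.add ?_ ?_
            · refine ContinuousOn.add ?_ ?_
              · refine ContinuousOn.add ?_ ?_
                · exact qc.comp_continuousOn cy
                · exact qc.comp_continuousOn ci
              · exact qc.comp_continuousOn cip
            · exact qc.comp_continuousOn cii
          · exact qc.comp_continuousOn (cy.sub ci)
        · exact qc.comp_continuousOn (continuousOn_const.sub cy)
      · exact qc.comp_continuousOn (cip.sub cii)
    · exact qc.comp_continuousOn ((continuousOn_const.sub cy).div_const 2 |>.sub cip)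
  have hder : ∀ x ∈ Set.Ico (0:ℝ) T, HasDerivWithinAt (fun t => (min (y t) 0) ^ 2 + (min (i t) 0) ^ 2 + (min (ip t) 0) ^ 2 + (min (ii t) 0) ^ 2 + (min (y t - i t) 0) ^ 2 + (min (1 - y t) 0) ^ 2 + (min (ip t - ii t) 0) ^ 2 + (min ((1 - y t) / 2 - ip t) 0) ^ 2)
      ((fun x => 2 * min (y x) 0 * (-rp * y x ^ 2 + rm * (1 - y x))
      + 2 * min (i x) 0 * (-(1 + rp * y x) * i x + rm * (ip x + ii x))
      + 2 * min (ip x) 0 * (rp * (y x - i x / 2) * i x - (1 + rm) * ip x + ii x)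
      + 2 * min (ii x) 0 * (rp * i x ^ 2 / 2 + lam * ip x - (2 + rm + lam) * ii x)
      + 2 * min (y x - i x) 0 * ((-rp * y x ^ 2 + rm * (1 - y x)) - (-(1 + rp * y x) * i x + rm * (ip x + ii x)))
      + 2 * min (1 - y x) 0 * (0 - (-rp * y x ^ 2 + rm * (1 - y x)))
      + 2 * min (ip x - ii x) 0 * ((rp * (y x - i x / 2) * i x - (1 + rm) * ip x + ii x) - (rp * i x ^ 2 / 2 + lam * ip x - (2 + rm + lam) * ii x))
      + 2 * min ((1 - y x) / 2 - ip x) 0 * ((0 - (-rp * y x ^ 2 + rm * (1 - y x))) / 2 - (rp * (y x - i x / 2) * i x - (1 + rm) * ip x + ii x))) x) (Set.Ici x) x := by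
    intro x hx
    have hx0 : (0:ℝ) ≤ x := hx.1
    have hmono : Set.Ici x ⊆ Set.Ici (0:ℝ) := Set.Ici_subset_Ici.2 hx0
    have HY := (hy x hx0).mono hmono
    have HI := (hi x hx0).mono hmono
    have HP := (hip x hx0).mono hmono
    have HJ := (hii x hx0).mono hmono
    exact ((((((((hasDerivAt_q (y x)).comp_hasDerivWithinAt x HY).add
      ((hasDerivAt_q (i x)).comp_hasDerivWithinAt x HI)).add
      ((hasDerivAt_q (ip x)).comp_hasDerivWithinAt x HP)).add
      ((hasDerivAt_q (ii x)).comp_hasDerivWithinAt x HJ)).add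
      ((hasDerivAt_q (y x - i x)).comp_hasDerivWithinAt x (HY.sub HI))).add
      ((hasDerivAt_q (1 - y x)).comp_hasDerivWithinAt x
        ((hasDerivWithinAt_const x _ 1).sub HY))).add
      ((hasDerivAt_q (ip x - ii x)).comp_hasDerivWithinAt x (HP.sub HJ))).add
      ((hasDerivAt_q ((1 - y x) / 2 - ip x)).comp_hasDerivWithinAt x
        ((((hasDerivWithinAt_const x _ 1).sub HY).div_const 2).sub HP))
  have ha : (fun t => (min (y t) 0) ^ 2 + (min (i t) 0) ^ 2 + (min (ip t) 0) ^ 2 + (min (ii t) 0) ^ 2 + (min (y t - i t) 0) ^ 2 + (min (1 - y t) 0) ^ 2 + (min (ip t - ii t) 0) ^ 2 + (min ((1 - y t) / 2 - ip t) 0) ^ 2) 0 ≤ 0 := by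
    show (min (y 0) 0) ^ 2 + (min (i 0) 0) ^ 2 + (min (ip 0) 0) ^ 2 + (min (ii 0) 0) ^ 2 + (min (y 0 - i 0) 0) ^ 2 + (min (1 - y 0) 0) ^ 2 + (min (ip 0 - ii 0) 0) ^ 2 + (min ((1 - y 0) / 2 - ip 0) 0) ^ 2 ≤ 0
    rw [min_eq_right h01, min_eq_right h02, min_eq_right h03, min_eq_right h04,
      min_eq_right (show (0:ℝ) ≤ y 0 - i 0 by linarith),
      min_eq_right (show (0:ℝ) ≤ 1 - y 0 by linarith),
      min_eq_right (show (0:ℝ) ≤ ip 0 - ii 0 by linarith),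
      min_eq_right (show (0:ℝ) ≤ (1 - y 0) / 2 - ip 0 by linarith)]
    norm_num
  have hbound : ∀ x ∈ Set.Ico (0:ℝ) T,
      (fun x => 2 * min (y x) 0 * (-rp * y x ^ 2 + rm * (1 - y x))
      + 2 * min (i x) 0 * (-(1 + rp * y x) * i x + rm * (ip x + ii x))
      + 2 * min (ip x) 0 * (rp * (y x - i x / 2) * i x - (1 + rm) * ip x + ii x)
      + 2 * min (ii x) 0 * (rp * i x ^ 2 / 2 + lam * ip x - (2 + rm + lam) * ii x)
      + 2 * min (y x - i x) 0 * ((-rp * y x ^ 2 + rm * (1 - y x)) - (-(1 + rp * y x) * i x + rm * (ip x + ii x)))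
      + 2 * min (1 - y x) 0 * (0 - (-rp * y x ^ 2 + rm * (1 - y x)))
      + 2 * min (ip x - ii x) 0 * ((rp * (y x - i x / 2) * i x - (1 + rm) * ip x + ii x) - (rp * i x ^ 2 / 2 + lam * ip x - (2 + rm + lam) * ii x))
      + 2 * min ((1 - y x) / 2 - ip x) 0 * ((0 - (-rp * y x ^ 2 + rm * (1 - y x))) / 2 - (rp * (y x - i x / 2) * i x - (1 + rm) * ip x + ii x))) x ≤ (16 * (3 * rp * B + 3 * rm + lam + 3)) * (fun t => (min (y t) 0) ^ 2 + (min (i t) 0) ^ 2 + (min (ip t) 0) ^ 2 + (min (ii t) 0) ^ 2 + (min (y t - i t) 0) ^ 2 + (min (1 - y t) 0) ^ 2 + (min (ip t - ii t) 0) ^ 2 + (min ((1 - y t) / 2 - ip t) 0) ^ 2) x + 0 := by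
    intro x hx
    have hxm : x ∈ Set.Icc (0:ℝ) T := ⟨hx.1, hx.2.le⟩
    have := keyineq rp rm lam B (y x) (i x) (ip x) (ii x) hrp hrm hlam hB0
      (hYB x hxm) (hIB x hxm)
    beta_reduce
    linarith only [this]
  have main := le_gronwallBound_of_liminf_deriv_right_le (a := 0) (b := T)
    (δ := 0) (K := (16 * (3 * rp * B + 3 * rm + lam + 3))) (ε := 0) hcont
    (fun x hx r hr => (hder x hx).liminf_right_slope_le hr) ha hbound
  have hfT := main T (Set.right_mem_Icc.2 hT)
  rw [gronwallBound_ε0_δ0] at hfT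
  replace hfT : (min (y T) 0) ^ 2 + (min (i T) 0) ^ 2 + (min (ip T) 0) ^ 2 + (min (ii T) 0) ^ 2 + (min (y T - i T) 0) ^ 2 + (min (1 - y T) 0) ^ 2 + (min (ip T - ii T) 0) ^ 2 + (min ((1 - y T) / 2 - ip T) 0) ^ 2 ≤ 0 := hfT
  have s1 := sq_nonneg (min (y T) 0)
  have s2 := sq_nonneg (min (i T) 0)
  have s3 := sq_nonneg (min (ip T) 0)
  have s4 := sq_nonneg (min (ii T) 0)
  have s5 := sq_nonneg (min (y T - i T) 0)
  have s6 := sq_nonneg (min (1 - y T) 0)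
  have s7 := sq_nonneg (min (ip T - ii T) 0)
  have s8 := sq_nonneg (min ((1 - y T) / 2 - ip T) 0)
  have two_ne : (2:ℕ) ≠ 0 := by norm_num
  have g1 : 0 ≤ y T := min_eq_zero_imp
    ((pow_eq_zero_iff two_ne).1 (by linarith only [hfT, s2, s3, s4, s5, s6, s7, s8, sq_nonneg (min (y T) 0)] : (min (y T) 0) ^ 2 = 0))
  have g2 : 0 ≤ i T := min_eq_zero_imp
    ((pow_eq_zero_iff two_ne).1 (by linarith only [hfT, s1, s3, s4, s5, s6, s7, s8, sq_nonneg (min (i T) 0)] : (min (i T) 0) ^ 2 = 0))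
  have g3 : 0 ≤ ip T := min_eq_zero_imp
    ((pow_eq_zero_iff two_ne).1 (by linarith only [hfT, s1, s2, s4, s5, s6, s7, s8, sq_nonneg (min (ip T) 0)] : (min (ip T) 0) ^ 2 = 0))
  have g4 : 0 ≤ ii T := min_eq_zero_imp
    ((pow_eq_zero_iff two_ne).1 (by linarith only [hfT, s1, s2, s3, s5, s6, s7, s8, sq_nonneg (min (ii T) 0)] : (min (ii T) 0) ^ 2 = 0))
  have g5 : 0 ≤ y T - i T := min_eq_zero_imp
    ((pow_eq_zero_iff two_ne).1 (by linarith only [hfT, s1, s2, s3, s4, s6, s7, s8, sq_nonneg (min (y T - i T) 0)] : (min (y T - i T) 0) ^ 2 = 0))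
  have g6 : 0 ≤ 1 - y T := min_eq_zero_imp
    ((pow_eq_zero_iff two_ne).1 (by linarith only [hfT, s1, s2, s3, s4, s5, s7, s8, sq_nonneg (min (1 - y T) 0)] : (min (1 - y T) 0) ^ 2 = 0))
  have g7 : 0 ≤ ip T - ii T := min_eq_zero_imp
    ((pow_eq_zero_iff two_ne).1 (by linarith only [hfT, s1, s2, s3, s4, s5, s6, s8, sq_nonneg (min (ip T - ii T) 0)] : (min (ip T - ii T) 0) ^ 2 = 0))
  have g8 : 0 ≤ (1 - y T) / 2 - ip T := min_eq_zero_imp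
    ((pow_eq_zero_iff two_ne).1 (by linarith only [hfT, s1, s2, s3, s4, s5, s6, s7, sq_nonneg (min ((1 - y T) / 2 - ip T) 0)] : (min ((1 - y T) / 2 - ip T) 0) ^ 2 = 0))
  exact ⟨g1, g2, g3, g4, by linarith, by linarith, by linarith, by linarith⟩
end

section
/- Consider the ODE system i' = −(1+r₊y)i + r₋(ip + ii), ip' = r₊(y − i/2)i − (1+r₋)ip + ii, ii' = r₊i²/2 + λ·ip − (2+r₋+λ)ii on the invariant set Λ = {(y,i,ip,ii) : 0 ≤ i ≤ y ≤ 1, 0 ≤ ii ≤ ip ≤ (1−y)/2}, with y(t) a common solution of y' = −r₊y² + r₋(1−y). If u(t) = (i,ip,ii)(t) and v(t) are two solutions driven by the same y(t) with u(0) ≤ v(0) coordinatewise, then u(t) ≤ v(t) coordinatewise for all t ≥ 0. -/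
/-!
By the identity `i₂² - i₁² = (i₁ + i₂)(i₂ - i₁)`, the difference `w = v - u` of two solutions
driven by the same `y` solves a linear system `w' = A(t) w` exactly, and on `Λ` the matrix `A(t)`
has nonnegative off-diagonal entries and entries bounded above. For such a system the total
negative part `f = ∑ₖ (wₖ)⁻` satisfies `D⁺f ≤ C f`: a coordinate with `wₖ ≤ 0` can only be pushed
down through its own (bounded) diagonal term or through the negative parts of the others. Since
`f 0 = 0`, Gronwall's inequality gives `f ≡ 0`, i.e. `w ≥ 0`.
-/

open Set Filter Topology Matrix

lemma eventually_slope_negPart_lt {w : ℝ → ℝ} {w' x r : ℝ}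
    (hw : HasDerivWithinAt w w' (Ioi x) x) (hr : 0 < r) (hwr : w x ≤ 0 → -w' < r) :
    ∀ᶠ z in 𝓝[>] x, slope (fun s => (w s)⁻) x z < r := by
  rcases lt_or_ge 0 (w x) with hx | hx
  · filter_upwards [hw.continuousWithinAt.eventually_const_lt hx] with z hz
    simpa [slope_def_field, negPart_eq_zero.2 hz.le, negPart_eq_zero.2 hx.le] using hr
  · have hslope : ∀ᶠ z in 𝓝[>] x, -r < slope w x z :=
      ((hasDerivWithinAt_iff_tendsto_slope' self_notMem_Ioi).1 hw).eventually_const_lt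
        (by linarith [hwr hx])
    filter_upwards [hslope, self_mem_nhdsWithin] with z hz (hxz : x < z)
    rw [slope_def_field, lt_div_iff₀ (sub_pos.2 hxz)] at hz
    rw [slope_def_field, div_lt_iff₀ (sub_pos.2 hxz), negPart_eq_neg.2 hx, negPart_def]
    have : 0 < r * (z - x) := mul_pos hr (sub_pos.2 hxz)
    rw [sub_neg_eq_add, ← lt_sub_iff_add_lt, max_lt_iff]
    constructor <;> linarith

section Cooperative

variable {ι : Type*} [Fintype ι]

lemma slope_sum {f : ι → ℝ → ℝ} (x z : ℝ) :
    slope (fun s => ∑ k, f k s) x z = ∑ k, slope (f k) x z := by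
  simp only [slope_def_field, ← Finset.sum_div, Finset.sum_sub_distrib]

lemma eventually_slope_sum_negPart_lt {w : ℝ → ι → ℝ} {w' : ι → ℝ} {x C r : ℝ}
    (hw : ∀ k, HasDerivWithinAt (fun s => w s k) (w' k) (Ioi x) x) (hC : 0 ≤ C)
    (hw' : ∀ k, w x k ≤ 0 → -w' k ≤ C) (hr : (Fintype.card ι : ℝ) * C < r) :
    ∀ᶠ z in 𝓝[>] x, slope (fun s => ∑ k, (w s k)⁻) x z < r := by
  set n : ℝ := (Fintype.card ι : ℝ)
  set δ := (r - n * C) / (n + 1)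
  have hδ : 0 < δ := div_pos (by linarith) (by positivity)
  have hnδ : n * (C + δ) < r := by
    have : (n + 1) * δ = r - n * C := mul_div_cancel₀ _ (by positivity)
    nlinarith
  have hk : ∀ k, ∀ᶠ z in 𝓝[>] x, slope (fun s => (w s k)⁻) x z < C + δ := fun k =>
    eventually_slope_negPart_lt (hw k) (by linarith) fun h => by linarith [hw' k h]
  filter_upwards [eventually_all.2 hk] with z hz
  calc slope (fun s => ∑ k, (w s k)⁻) x z = ∑ k, slope (fun s => (w s k)⁻) x z :=
        slope_sum x z
    _ ≤ ∑ _k : ι, (C + δ) := Finset.sum_le_sum fun k _ => (hz k).le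
    _ = n * (C + δ) := by simp [n, mul_add]
    _ < r := hnδ

lemma neg_mulVec_apply_le_mul_sum_negPart {A : Matrix ι ι ℝ} {v : ι → ℝ} {k : ι} {K : ℝ}
    (hA : ∀ j, j ≠ k → 0 ≤ A k j) (hAK : ∀ j, A k j ≤ K) (hv : v k ≤ 0) :
    -(A *ᵥ v) k ≤ K * ∑ j, (v j)⁻ := by
  rw [Matrix.mulVec, dotProduct, ← Finset.sum_neg_distrib, Finset.mul_sum]
  gcongr with j
  calc -(A k j * v j) = A k j * -v j := by ring
    _ ≤ A k j * (v j)⁻ := by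
      rcases eq_or_ne j k with rfl | hj
      · rw [negPart_eq_neg.2 hv]
      · exact mul_le_mul_of_nonneg_left (neg_le_negPart _) (hA j hj)
    _ ≤ K * (v j)⁻ := mul_le_mul_of_nonneg_right (hAK j) (negPart_nonneg _)

theorem nonneg_of_hasDerivWithinAt_mulVec {A : ℝ → Matrix ι ι ℝ} {w : ℝ → ι → ℝ} {K : ℝ}
    (hw : ∀ t ∈ Ici (0 : ℝ), HasDerivWithinAt w (A t *ᵥ w t) (Ici 0) t)
    (hA : ∀ t ∈ Ici (0 : ℝ), ∀ k j, j ≠ k → 0 ≤ A t k j)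
    (hAK : ∀ t ∈ Ici (0 : ℝ), ∀ k j, A t k j ≤ K) (h0 : 0 ≤ w 0) :
    ∀ t ∈ Ici (0 : ℝ), 0 ≤ w t := by
  set f := fun s => ∑ k, (w s k)⁻
  set C := (Fintype.card ι : ℝ) * max K 0
  have hcont : ContinuousOn f (Ici 0) := by
    have hwc : ContinuousOn w (Ici 0) := fun x hx => (hw x hx).continuousWithinAt
    simp only [f, negPart_def]
    refine continuousOn_finsetSum _ fun k _ => ?_
    have hwk : ContinuousOn (fun s => w s k) (Ici 0) :=
      (continuous_apply k).comp_continuousOn hwc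
    exact ContinuousOn.sup hwk.neg continuousOn_const
  have hslope : ∀ x ∈ Ici (0 : ℝ), ∀ r, C * f x < r →
      ∀ᶠ z in 𝓝[>] x, (z - x)⁻¹ * (f z - f x) < r := by
    intro x hx r hr
    refine eventually_slope_sum_negPart_lt
      (fun k => hasDerivWithinAt_pi.1 ((hw x hx).mono (Ioi_subset_Ici hx)) k)
      (mul_nonneg (le_max_right K 0) (Finset.sum_nonneg fun k _ => negPart_nonneg _))
      (fun k hk => neg_mulVec_apply_le_mul_sum_negPart (hA x hx k)
        (fun j => (hAK x hx k j).trans (le_max_left K 0)) hk) (by simpa [C, mul_assoc] using hr)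
  intro t ht k
  have hft : f t ≤ 0 := by
    have := le_gronwallBound_of_liminf_deriv_right_le (hcont.mono Icc_subset_Ici_self)
      (fun x hx r hr => (hslope x (Icc_subset_Ici_self (Ico_subset_Icc_self hx)) r hr).frequently)
      (δ := 0) (K := C) (ε := 0)
      (Finset.sum_eq_zero fun k _ => negPart_eq_zero.2 (h0 k)).le (fun x _ => by simp)
      t ⟨ht, le_rfl⟩
    rwa [sub_zero, gronwallBound_ε0_δ0] at this
  have := (Finset.sum_eq_zero_iff_of_nonneg fun k _ => negPart_nonneg (w t k)).1
    (hft.antisymm (Finset.sum_nonneg fun k _ => negPart_nonneg _)) k (Finset.mem_univ k)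
  exact negPart_eq_zero.1 this

end Cooperative

lemma hasDerivWithinAt_vec3 {f g h : ℝ → ℝ} {f' g' h' t : ℝ} {s : Set ℝ}
    (hf : HasDerivWithinAt f f' s t) (hg : HasDerivWithinAt g g' s t)
    (hh : HasDerivWithinAt h h' s t) :
    HasDerivWithinAt (fun t => ![f t, g t, h t]) ![f', g', h'] s t :=
  hasDerivWithinAt_pi.2 (Fin.forall_fin_succ.2 ⟨hf, Fin.forall_fin_succ.2 ⟨hg,
    Fin.forall_fin_succ.2 ⟨hh, finZeroElim⟩⟩⟩)

namespace PartnerModel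

noncomputable def field (rp rm lam y : ℝ) (u : Fin 3 → ℝ) : Fin 3 → ℝ :=
  ![-(1 + rp * y) * u 0 + rm * (u 1 + u 2),
    rp * (y - u 0 / 2) * u 0 - (1 + rm) * u 1 + u 2,
    rp * u 0 ^ 2 / 2 + lam * u 1 - (2 + rm + lam) * u 2]

noncomputable def diffMatrix (rp rm lam y i₁ i₂ : ℝ) : Matrix (Fin 3) (Fin 3) ℝ :=
  !![-(1 + rp * y), rm, rm;
     rp * (y - (i₁ + i₂) / 2), -(1 + rm), 1;
     rp * ((i₁ + i₂) / 2), lam, -(2 + rm + lam)]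

lemma field_sub_field (rp rm lam y : ℝ) (u v : Fin 3 → ℝ) :
    field rp rm lam y v - field rp rm lam y u =
      diffMatrix rp rm lam y (u 0) (v 0) *ᵥ (v - u) := by
  ext k
  fin_cases k <;> simp [field, diffMatrix, Matrix.mulVec, dotProduct, Fin.sum_univ_three] <;> ring

variable {rp rm lam y i₁ i₂ : ℝ}

lemma diffMatrix_nonneg_of_ne (hrp : 0 ≤ rp) (hrm : 0 ≤ rm) (hlam : 0 ≤ lam)
    (hi₁ : 0 ≤ i₁) (hi₂ : 0 ≤ i₂) (hi₁y : i₁ ≤ y) (hi₂y : i₂ ≤ y) :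
    ∀ k j, j ≠ k → 0 ≤ diffMatrix rp rm lam y i₁ i₂ k j := by
  have : 0 ≤ rp * (y - (i₁ + i₂) / 2) := mul_nonneg hrp (by linarith)
  have : 0 ≤ rp * ((i₁ + i₂) / 2) := mul_nonneg hrp (by linarith)
  intro k j hjk
  fin_cases k <;> fin_cases j <;> simp_all [diffMatrix]

lemma diffMatrix_le (hrp : 0 ≤ rp) (hrm : 0 ≤ rm) (hlam : 0 ≤ lam)
    (hi₁ : 0 ≤ i₁) (hi₂ : 0 ≤ i₂) (hi₁y : i₁ ≤ y) (hi₂y : i₂ ≤ y) (hy : y ≤ 1) :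
    ∀ k j, diffMatrix rp rm lam y i₁ i₂ k j ≤ rp + rm + lam + 1 := by
  have : rp * (y - (i₁ + i₂) / 2) ≤ rp := by nlinarith
  have : rp * ((i₁ + i₂) / 2) ≤ rp := by nlinarith
  have : 0 ≤ rp * y := mul_nonneg hrp (hi₁.trans hi₁y)
  intro k j
  fin_cases k <;> fin_cases j <;> simp [diffMatrix] <;> linarith

end PartnerModel

theorem stmt16_general (rp rm lam : ℝ) (hrp : 0 < rp) (hrm : 0 < rm) (hlam : 0 < lam)
    (y i₁ ip₁ ii₁ i₂ ip₂ ii₂ : ℝ → ℝ)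
    (hi₁ : ∀ t ∈ Set.Ici (0 : ℝ),
      HasDerivWithinAt i₁ (-(1 + rp * y t) * i₁ t + rm * (ip₁ t + ii₁ t)) (Set.Ici 0) t)
    (hip₁ : ∀ t ∈ Set.Ici (0 : ℝ),
      HasDerivWithinAt ip₁ (rp * (y t - i₁ t / 2) * i₁ t - (1 + rm) * ip₁ t + ii₁ t)
        (Set.Ici 0) t)
    (hii₁ : ∀ t ∈ Set.Ici (0 : ℝ),
      HasDerivWithinAt ii₁ (rp * i₁ t ^ 2 / 2 + lam * ip₁ t - (2 + rm + lam) * ii₁ t)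
        (Set.Ici 0) t)
    (hi₂ : ∀ t ∈ Set.Ici (0 : ℝ),
      HasDerivWithinAt i₂ (-(1 + rp * y t) * i₂ t + rm * (ip₂ t + ii₂ t)) (Set.Ici 0) t)
    (hip₂ : ∀ t ∈ Set.Ici (0 : ℝ),
      HasDerivWithinAt ip₂ (rp * (y t - i₂ t / 2) * i₂ t - (1 + rm) * ip₂ t + ii₂ t)
        (Set.Ici 0) t)
    (hii₂ : ∀ t ∈ Set.Ici (0 : ℝ),
      HasDerivWithinAt ii₂ (rp * i₂ t ^ 2 / 2 + lam * ip₂ t - (2 + rm + lam) * ii₂ t)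
        (Set.Ici 0) t)
    (hΛ₁ : ∀ t ∈ Set.Ici (0 : ℝ), 0 ≤ i₁ t ∧ i₁ t ≤ y t ∧ y t ≤ 1 ∧
      0 ≤ ii₁ t ∧ ii₁ t ≤ ip₁ t ∧ ip₁ t ≤ (1 - y t) / 2)
    (hΛ₂ : ∀ t ∈ Set.Ici (0 : ℝ), 0 ≤ i₂ t ∧ i₂ t ≤ y t ∧ y t ≤ 1 ∧
      0 ≤ ii₂ t ∧ ii₂ t ≤ ip₂ t ∧ ip₂ t ≤ (1 - y t) / 2)
    (h0 : i₁ 0 ≤ i₂ 0 ∧ ip₁ 0 ≤ ip₂ 0 ∧ ii₁ 0 ≤ ii₂ 0) :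
    ∀ t ∈ Set.Ici (0 : ℝ), i₁ t ≤ i₂ t ∧ ip₁ t ≤ ip₂ t ∧ ii₁ t ≤ ii₂ t := by
  set u₁ : ℝ → Fin 3 → ℝ := fun t => ![i₁ t, ip₁ t, ii₁ t]
  set u₂ : ℝ → Fin 3 → ℝ := fun t => ![i₂ t, ip₂ t, ii₂ t]
  have hu₁ : ∀ t ∈ Ici (0 : ℝ),
      HasDerivWithinAt u₁ (PartnerModel.field rp rm lam (y t) (u₁ t)) (Ici 0) t := fun t ht =>
    hasDerivWithinAt_vec3 (hi₁ t ht) (hip₁ t ht) (hii₁ t ht)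
  have hu₂ : ∀ t ∈ Ici (0 : ℝ),
      HasDerivWithinAt u₂ (PartnerModel.field rp rm lam (y t) (u₂ t)) (Ici 0) t := fun t ht =>
    hasDerivWithinAt_vec3 (hi₂ t ht) (hip₂ t ht) (hii₂ t ht)
  have hw := nonneg_of_hasDerivWithinAt_mulVec (w := u₂ - u₁)
    (A := fun t => PartnerModel.diffMatrix rp rm lam (y t) (i₁ t) (i₂ t))
    (fun t ht => by
      have := (hu₂ t ht).sub (hu₁ t ht)
      rwa [PartnerModel.field_sub_field] at this)
    (fun t ht => by
      obtain ⟨h₁, h₁y, -⟩ := hΛ₁ t ht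
      obtain ⟨h₂, h₂y, -⟩ := hΛ₂ t ht
      exact PartnerModel.diffMatrix_nonneg_of_ne hrp.le hrm.le hlam.le h₁ h₂ h₁y h₂y)
    (fun t ht => by
      obtain ⟨h₁, h₁y, hy1, -⟩ := hΛ₁ t ht
      obtain ⟨h₂, h₂y, -⟩ := hΛ₂ t ht
      exact PartnerModel.diffMatrix_le hrp.le hrm.le hlam.le h₁ h₂ h₁y h₂y hy1)
    (by
      obtain ⟨h0i, h0ip, h0ii⟩ := h0
      intro k
      fin_cases k <;> simpa [u₁, u₂])
  intro t ht
  exact ⟨sub_nonneg.1 (hw t ht 0), sub_nonneg.1 (hw t ht 1), sub_nonneg.1 (hw t ht 2)⟩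

/-- Monotonicity (cooperativity) of the mean-field equations of the partner model in
`(i, ip, ii)` coordinates: two solutions driven by the same `y(t)`, both remaining in
the invariant region `Λ`, preserve the coordinatewise order of initial conditions. -/
theorem stmt16 (rp rm lam : ℝ) (hrp : 0 < rp) (hrm : 0 < rm) (hlam : 0 < lam)
    (y i₁ ip₁ ii₁ i₂ ip₂ ii₂ : ℝ → ℝ)
    (hy : ∀ t ∈ Set.Ici (0 : ℝ),
      HasDerivWithinAt y (-rp * y t ^ 2 + rm * (1 - y t)) (Set.Ici 0) t)
    (hi₁ : ∀ t ∈ Set.Ici (0 : ℝ),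
      HasDerivWithinAt i₁ (-(1 + rp * y t) * i₁ t + rm * (ip₁ t + ii₁ t)) (Set.Ici 0) t)
    (hip₁ : ∀ t ∈ Set.Ici (0 : ℝ),
      HasDerivWithinAt ip₁ (rp * (y t - i₁ t / 2) * i₁ t - (1 + rm) * ip₁ t + ii₁ t)
        (Set.Ici 0) t)
    (hii₁ : ∀ t ∈ Set.Ici (0 : ℝ),
      HasDerivWithinAt ii₁ (rp * i₁ t ^ 2 / 2 + lam * ip₁ t - (2 + rm + lam) * ii₁ t)
        (Set.Ici 0) t)
    (hi₂ : ∀ t ∈ Set.Ici (0 : ℝ),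
      HasDerivWithinAt i₂ (-(1 + rp * y t) * i₂ t + rm * (ip₂ t + ii₂ t)) (Set.Ici 0) t)
    (hip₂ : ∀ t ∈ Set.Ici (0 : ℝ),
      HasDerivWithinAt ip₂ (rp * (y t - i₂ t / 2) * i₂ t - (1 + rm) * ip₂ t + ii₂ t)
        (Set.Ici 0) t)
    (hii₂ : ∀ t ∈ Set.Ici (0 : ℝ),
      HasDerivWithinAt ii₂ (rp * i₂ t ^ 2 / 2 + lam * ip₂ t - (2 + rm + lam) * ii₂ t)
        (Set.Ici 0) t)
    (hΛ₁ : ∀ t ∈ Set.Ici (0 : ℝ), 0 ≤ i₁ t ∧ i₁ t ≤ y t ∧ y t ≤ 1 ∧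
      0 ≤ ii₁ t ∧ ii₁ t ≤ ip₁ t ∧ ip₁ t ≤ (1 - y t) / 2)
    (hΛ₂ : ∀ t ∈ Set.Ici (0 : ℝ), 0 ≤ i₂ t ∧ i₂ t ≤ y t ∧ y t ≤ 1 ∧
      0 ≤ ii₂ t ∧ ii₂ t ≤ ip₂ t ∧ ip₂ t ≤ (1 - y t) / 2)
    (h0 : i₁ 0 ≤ i₂ 0 ∧ ip₁ 0 ≤ ip₂ 0 ∧ ii₁ 0 ≤ ii₂ 0) :
    ∀ t ∈ Set.Ici (0 : ℝ), i₁ t ≤ i₂ t ∧ ip₁ t ≤ ip₂ t ∧ ii₁ t ≤ ii₂ t :=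
  stmt16_general rp rm lam hrp hrm hlam y i₁ ip₁ ii₁ i₂ ip₂ ii₂ hi₁ hip₁ hii₁ hi₂ hip₂ hii₂ hΛ₁ hΛ₂
    h0
end
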